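/- arXiv:math/9706224 — 2 statements merged into one kernel-verified Lean document; each statement's English description precedes it below -/
import Mathlib

section
/- Let μ be a singular cardinal which is a limit of measurable cardinals (i.e., the set of measurable cardinals below μ is unbounded in μ), let θ be a cardinal with θ < cf(μ), and let α* be any ordinal with α* < μ⁺. Then (μ⁺, μ) → (α*, μ)^{1,1}_θ holds; that is, for every function d : μ⁺ × μ → θ there exist A ⊆ μ⁺ of order type α* and B ⊆ μ of order type μ such that d restricted to A × B is constant. -/
open Cardinal Set Ordinal

/-- `A` (a set of ordinals) has order type `τ`. -/
def HasOrderType (A : Set Ordinal) (τ : Ordinal) : Prop :=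
  Nonempty ((Set.Iio τ) ≃o A)

/-- `l` is a measurable cardinal: `l` is uncountable and there is a
nonprincipal `l`-complete ultrafilter on a set of cardinality `l`. -/
def IsMeasurableCardinal (l : Cardinal) : Prop :=
  Cardinal.aleph0 < l ∧
    ∃ U : Ultrafilter l.out,
      (∀ x : l.out, ({x}ᶜ : Set l.out) ∈ U) ∧
      ∀ S : Set (Set l.out), Cardinal.mk S < l → (∀ s ∈ S, s ∈ U) → ⋂₀ S ∈ U

namespace PolarizedAux

/-- The ordinal corresponding to an element of `o.ToType`. -/
noncomputable def ordOf {o : Ordinal} (t : o.ToType) : Ordinal :=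
  (((Ordinal.ToType.mk (o := o))).symm t).1

theorem ordOf_lt {o : Ordinal} (t : o.ToType) : ordOf t < o :=
  (((Ordinal.ToType.mk (o := o))).symm t).2

theorem ordOf_lt_ordOf {o : Ordinal} {s t : o.ToType} : ordOf s < ordOf t ↔ s < t := by
  rw [← ((Ordinal.ToType.mk (o := o))).symm.lt_iff_lt]
  exact Iff.rfl

theorem ordOf_injective {o : Ordinal} : Function.Injective (ordOf (o := o)) := by
  intro s t h
  have := ((Ordinal.ToType.mk (o := o))).symm.injective
  exact this (Subtype.ext h)

/-- The element of `o.ToType` corresponding to an ordinal `i < o`. -/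
noncomputable def elt {o : Ordinal} (i : Ordinal) (h : i < o) : o.ToType :=
  (Ordinal.ToType.mk (o := o)) ⟨i, h⟩

@[simp] theorem ordOf_elt {o : Ordinal} (i : Ordinal) (h : i < o) : ordOf (elt i h) = i := by
  simp [ordOf, elt]

@[simp] theorem elt_ordOf {o : Ordinal} (t : o.ToType) : elt (ordOf t) (ordOf_lt t) = t := by
  simp [ordOf, elt]

/-- A set of fewer than `l` points is not in an `l`-complete nonprincipal ultrafilter. -/
theorem small_not_mem {l : Cardinal} (U : Ultrafilter l.out)
    (hnp : ∀ x : l.out, ({x}ᶜ : Set l.out) ∈ U)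
    (hcompl : ∀ S : Set (Set l.out), #S < l → (∀ s ∈ S, s ∈ U) → ⋂₀ S ∈ U)
    {X : Set l.out} (hX : #X < l) : X ∉ U := by
  have h1 : ((fun x => ({x}ᶜ : Set l.out)) '' X : Set (Set l.out)) ∈
      {S : Set (Set l.out) | #S < l} := lt_of_le_of_lt Cardinal.mk_image_le hX
  have h2 : ⋂₀ ((fun x => ({x}ᶜ : Set l.out)) '' X) ∈ U := by
    refine hcompl _ h1 ?_
    rintro s ⟨x, _, rfl⟩
    exact hnp x
  have h3 : ⋂₀ ((fun x => ({x}ᶜ : Set l.out)) '' X) = Xᶜ := by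
    ext z
    simp only [Set.sInter_image, Set.mem_iInter, Set.mem_compl_iff, Set.mem_singleton_iff]
    constructor
    · intro h hz; exact h z hz rfl
    · rintro h x hx rfl; exact h hx
  rw [h3] at h2
  exact (Ultrafilter.compl_mem_iff_notMem).1 h2

/-- A measurable cardinal is a strong limit. -/
theorem meas_power_lt {l x : Cardinal} (hl : IsMeasurableCardinal l) (hx : x < l) :
    (2 : Cardinal) ^ x < l := by
  obtain ⟨hℵ, U, hnp, hcompl⟩ := hl
  classical
  by_contra hle
  push_neg at hle
  have hinj : Nonempty (l.out ↪ Set x.out) := by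
    rw [← Cardinal.le_def, Cardinal.mk_out, Cardinal.mk_set, Cardinal.mk_out]
    exact hle
  obtain ⟨F⟩ := hinj
  set B : x.out → Set l.out := fun ξ =>
    if {a | ξ ∈ F a} ∈ U then {a | ξ ∈ F a} else {a | ξ ∈ F a}ᶜ with hB
  have hBU : ∀ ξ, B ξ ∈ U := by
    intro ξ
    rw [hB]
    by_cases h : {a | ξ ∈ F a} ∈ U
    · simpa [h]
    · simpa [h] using (Ultrafilter.compl_mem_iff_notMem).2 h
  have hS : #(Set.range B) < l := lt_of_le_of_lt Cardinal.mk_range_le (by rwa [Cardinal.mk_out])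
  have hmem : ⋂₀ (Set.range B) ∈ U := hcompl _ hS (by rintro s ⟨ξ, rfl⟩; exact hBU ξ)
  have hsub : (⋂₀ (Set.range B)).Subsingleton := by
    intro a ha b hb
    have hFab : F a = F b := by
      ext ξ
      have ha' : a ∈ B ξ := ha _ ⟨ξ, rfl⟩
      have hb' : b ∈ B ξ := hb _ ⟨ξ, rfl⟩
      rw [hB] at ha' hb'
      by_cases h : {a | ξ ∈ F a} ∈ U
      · simp only [if_pos h] at ha' hb'
        exact iff_of_true ha' hb'
      · simp only [if_neg h] at ha' hb'
        exact iff_of_false ha' hb'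
    exact F.injective hFab
  have hsmall : #(⋂₀ (Set.range B) : Set l.out) < l :=
    lt_of_le_of_lt (Cardinal.mk_le_one_iff_set_subsingleton.2 hsub)
      (lt_trans Cardinal.one_lt_aleph0 hℵ)
  exact small_not_mem U hnp hcompl hsmall hmem

/-- Pigeonhole: a map from a set of size `μ⁺` into a set of size `≤ μ` has a fiber of size `μ⁺`. -/
theorem pigeon {D V : Type u} {μ : Cardinal.{u}} (hμ : ℵ₀ ≤ μ) (F : D → V)
    (hD : Order.succ μ ≤ #D) (hV : #V ≤ μ) :
    ∃ v : V, Order.succ μ ≤ #{x : D // F x = v} := by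
  by_contra h
  push_neg at h
  have h' : ∀ v, #{x : D // F x = v} ≤ μ := fun v => Order.lt_succ_iff.1 (h v)
  have : #D = Cardinal.sum fun v : V => #{x : D // F x = v} := by
    rw [← Cardinal.mk_sigma]
    exact Cardinal.mk_congr (Equiv.sigmaFiberEquiv F).symm
  have hle : #D ≤ #V * μ := by
    rw [this]
    calc Cardinal.sum (fun v : V => #{x : D // F x = v})
        ≤ Cardinal.sum (fun _ : V => μ) := Cardinal.sum_le_sum _ _ h'
      _ = #V * μ := Cardinal.sum_const' _ _
  have : Order.succ μ ≤ μ := le_trans hD (le_trans hle (by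
    calc #V * μ ≤ μ * μ := mul_le_mul_left hV μ
      _ = μ := Cardinal.mul_eq_self hμ))
  exact absurd this (not_le.2 (Order.lt_succ μ))

end PolarizedAux
open Cardinal Set Ordinal PolarizedAux

/-- For `μ` a singular limit of measurable cardinals, `θ < cf(μ)` and any
ordinal `α* < μ⁺`, the polarized partition relation
`(μ⁺, μ) → (α*, μ)^{1,1}_θ` holds. -/
theorem polarized_partition_limit_of_measurables_any_otp
    (μ θ : Cardinal) (αstar : Ordinal) (hsing : μ.ord.cof < μ)
    (hlim : ∀ ν < μ, ∃ l, ν < l ∧ l < μ ∧ IsMeasurableCardinal l)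
    (hθ : θ < μ.ord.cof) (hα : αstar < (Order.succ μ).ord)
    (d : Ordinal → Ordinal → Ordinal)
    (hd : ∀ α < (Order.succ μ).ord, ∀ β < μ.ord, d α β < θ.ord) :
    ∃ A B : Set Ordinal,
      A ⊆ Set.Iio (Order.succ μ).ord ∧ B ⊆ Set.Iio μ.ord ∧
      HasOrderType A αstar ∧ HasOrderType B μ.ord ∧
      ∃ γ : Ordinal, ∀ α ∈ A, ∀ β ∈ B, d α β = γ := by
  classical
  -- basic cardinal facts
  have hμ0 : 0 < μ := by
    by_contra h
    push_neg at h
    rw [le_zero_iff] at h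
    rw [h] at hsing
    simp at hsing
  have hℵμ : ℵ₀ < μ := by
    obtain ⟨l, h0l, hlμ, hm⟩ := hlim 0 hμ0
    exact hm.1.trans hlμ
  have hℵ : ℵ₀ ≤ μ := hℵμ.le
  have hM0 : (0 : Ordinal) < μ.ord := by
    rw [Cardinal.lt_ord]; simpa using hμ0
  have hM10 : (0 : Ordinal) < (Order.succ μ).ord := by
    rw [Cardinal.lt_ord]; simpa using lt_of_le_of_lt (zero_le μ) (Order.lt_succ μ)
  -- θ = 0 is impossible
  by_cases hθ0 : θ = 0
  · exfalso
    have := hd 0 hM10 0 hM0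
    rw [hθ0] at this
    simp only [Cardinal.ord_zero] at this
    exact absurd this not_lt_zero
  set κ := μ.ord.cof with hκdef
  have hκμ : κ < μ := hsing
  have hθκ : θ < κ := hθ
  have hκℵ : ℵ₀ ≤ κ := Ordinal.aleph0_le_cof.2 (Cardinal.isSuccLimit_ord hℵ)
  have hsuccμ : ∀ x < μ, Order.succ x < μ := by
    intro x hx
    obtain ⟨l, hxl, hlμ, _⟩ := hlim x hx
    exact lt_of_le_of_lt (Order.succ_le_of_lt hxl) hlμ
  have hpow : ∀ x < μ, (2 : Cardinal) ^ x < μ := by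
    intro x hx
    obtain ⟨l, hxl, hlμ, hm⟩ := hlim x hx
    exact (meas_power_lt hm hxl).trans hlμ
  have hregsucc : (Order.succ μ).ord.cof = Order.succ μ := (Cardinal.isRegular_succ hℵ).cof_eq
  -- cofinal sequence in μ.ord
  obtain ⟨ι, fφ, hlsub, hι⟩ := Ordinal.exists_lsub_cof μ.ord
  have heqvι : Nonempty (κ.ord.ToType ≃ ι) := by
    rw [← Cardinal.eq, Cardinal.mk_toType, Cardinal.card_ord, hι]
  obtain ⟨eqvι⟩ := heqvι
  set φ' : Ordinal → Ordinal := fun i => if h : i < κ.ord then fφ (eqvι (elt i h)) else 0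
    with hφ'def
  have hφ'pos : ∀ i (h : i < κ.ord), φ' i = fφ (eqvι (elt i h)) := by
    intro i h
    show (if h : i < κ.ord then fφ (eqvι (elt i h)) else 0) = _
    rw [dif_pos h]
  have hφ'lt : ∀ i, φ' i < μ.ord := by
    intro i
    by_cases h : i < κ.ord
    · rw [hφ'pos i h, ← hlsub]; exact Ordinal.lt_lsub _ _
    · show (if h : i < κ.ord then fφ (eqvι (elt i h)) else 0) < μ.ord
      rw [dif_neg h]; exact hM0
  have hφcard : ∀ i, (φ' i).card < μ := fun i => Cardinal.lt_ord.1 (hφ'lt i)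
  -- the sequence of measurable cardinals
  set b : Ordinal → Cardinal := fun i => κ + θ + (φ' i).card + 1 with hbdef
  have hb1 : ∀ i, 1 ≤ b i := fun i => self_le_add_left 1 _
  have hbκ : ∀ i, κ ≤ b i := fun i =>
    le_trans (le_trans (self_le_add_right κ θ) (self_le_add_right _ _)) (self_le_add_right _ _)
  have hbθ : ∀ i, θ ≤ b i := fun i =>
    le_trans (le_trans (self_le_add_left θ κ) (self_le_add_right _ _)) (self_le_add_right _ _)
  have hbφ : ∀ i, (φ' i).card ≤ b i :=
    fun i => le_trans (self_le_add_left _ _) (self_le_add_right _ _)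
  have hbμ : ∀ i, b i < μ := by
    intro i
    refine Cardinal.add_lt_of_lt hℵ (Cardinal.add_lt_of_lt hℵ
      (Cardinal.add_lt_of_lt hℵ hκμ (hθκ.trans hκμ)) (hφcard i)) ?_
    exact lt_of_lt_of_le Cardinal.one_lt_aleph0 hℵ
  set LamStep : ∀ i : Ordinal, (∀ j, j < i → Cardinal) → Cardinal := fun i IH =>
    sInf {l : Cardinal | IsMeasurableCardinal l ∧ l < μ ∧
      Order.succ (⨆ t : i.ToType, IH (ordOf t) (ordOf_lt t)) * b i + b i < l} with hLamStep
  set Λ : Ordinal → Cardinal := fun i => Ordinal.lt_wf.fix LamStep i with hΛdef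
  have hΛeq : ∀ i, Λ i = LamStep i (fun j _ => Λ j) := fun i => WellFounded.fix_eq _ _ _
  set ν : Ordinal → Cardinal := fun i =>
    Order.succ (⨆ t : i.ToType, Λ (ordOf t)) * b i + b i with hνdef
  have hΛeq' : ∀ i, Λ i =
      sInf {l : Cardinal | IsMeasurableCardinal l ∧ l < μ ∧ ν i < l} := fun i => hΛeq i
  have hgood : ∀ i, i < κ.ord → IsMeasurableCardinal (Λ i) ∧ Λ i < μ ∧ ν i < Λ i := by
    intro i
    induction i using WellFounded.induction Ordinal.lt_wf with
    | _ i IH =>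
      intro hiK
      have hsupμ : (⨆ t : i.ToType, Λ (ordOf t)) < μ := by
        have h1 : (⨆ t : i.ToType, (Λ (ordOf t)).ord) < μ.ord := by
          refine Ordinal.iSup_lt_ord ?_ ?_
          · rw [Cardinal.mk_toType]; exact Cardinal.lt_ord.1 hiK
          · intro t
            exact Cardinal.ord_lt_ord.2 ((IH (ordOf t) (ordOf_lt t) ((ordOf_lt t).trans hiK)).2.1)
        have h2 : (⨆ t : i.ToType, Λ (ordOf t)) ≤ (⨆ t : i.ToType, (Λ (ordOf t)).ord).card := by
          refine ciSup_le' ?_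
          intro t
          calc Λ (ordOf t) = ((Λ (ordOf t)).ord).card := (Cardinal.card_ord _).symm
            _ ≤ _ := Ordinal.card_le_card (le_ciSup (Ordinal.bddAbove_range _) t)
        exact lt_of_le_of_lt h2 (Cardinal.lt_ord.1 h1)
      have hνμ : ν i < μ :=
        Cardinal.add_lt_of_lt hℵ
          (Cardinal.mul_lt_of_lt hℵ (hsuccμ _ hsupμ) (hbμ i)) (hbμ i)
      obtain ⟨l, hνl, hlμ, hm⟩ := hlim (ν i) hνμ
      have hne : {l : Cardinal | IsMeasurableCardinal l ∧ l < μ ∧ ν i < l}.Nonempty :=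
        ⟨l, hm, hlμ, hνl⟩
      rw [hΛeq' i]
      exact csInf_mem hne
  have hΛmeas : ∀ i, i < κ.ord → IsMeasurableCardinal (Λ i) := fun i hi => (hgood i hi).1
  have hΛμ : ∀ i, i < κ.ord → Λ i < μ := fun i hi => (hgood i hi).2.1
  have hΛν : ∀ i, i < κ.ord → ν i < Λ i := fun i hi => (hgood i hi).2.2
  have hνb : ∀ i, b i ≤ ν i := fun i => self_le_add_left _ _
  have hΛκ : ∀ i, i < κ.ord → κ < Λ i := fun i hi =>
    lt_of_le_of_lt (le_trans (hbκ i) (hνb i)) (hΛν i hi)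
  have hΛθ : ∀ i, i < κ.ord → θ < Λ i := fun i hi =>
    lt_of_le_of_lt (le_trans (hbθ i) (hνb i)) (hΛν i hi)
  have hΛφ : ∀ i, i < κ.ord → (φ' i).card < Λ i := fun i hi =>
    lt_of_le_of_lt (le_trans (hbφ i) (hνb i)) (hΛν i hi)
  have hℵΛ : ∀ i, i < κ.ord → ℵ₀ < Λ i := fun i hi => (hΛmeas i hi).1
  have hsuccsup : ∀ i, Order.succ (⨆ t : i.ToType, Λ (ordOf t)) ≤ ν i := by
    intro i
    calc Order.succ (⨆ t : i.ToType, Λ (ordOf t))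
        = Order.succ (⨆ t : i.ToType, Λ (ordOf t)) * 1 := (mul_one _).symm
      _ ≤ Order.succ (⨆ t : i.ToType, Λ (ordOf t)) * b i := mul_le_mul_right (hb1 i) _
      _ ≤ ν i := self_le_add_right _ _
  have hΛmono : ∀ j i, j < i → i < κ.ord → Λ j < Λ i := by
    intro j i hji hiK
    have h1 : Λ j ≤ ⨆ t : i.ToType, Λ (ordOf t) := by
      have := le_ciSup (Cardinal.bddAbove_range fun t : i.ToType => Λ (ordOf t)) (elt j hji)
      rwa [ordOf_elt] at this
    exact lt_of_le_of_lt (le_trans h1 (le_trans (Order.le_succ _) (hsuccsup i))) (hΛν i hiK)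
  have hΛle : ∀ j i, j ≤ i → i < κ.ord → Λ j ≤ Λ i := by
    intro j i hji hiK
    rcases lt_or_eq_of_le hji with h | h
    · exact (hΛmono j i h hiK).le
    · rw [h]
  have hreach : ∀ cc, cc < μ → ∃ i, i < κ.ord ∧ cc < Λ i := by
    intro cc hcc
    have h1 : cc.ord < μ.ord := Cardinal.ord_lt_ord.2 hcc
    rw [← hlsub] at h1
    obtain ⟨s, hs⟩ := Ordinal.lt_lsub_iff.1 h1
    refine ⟨ordOf (eqvι.symm s), ordOf_lt _, ?_⟩
    have hiK : ordOf (eqvι.symm s) < κ.ord := ordOf_lt _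
    have h2 : φ' (ordOf (eqvι.symm s)) = fφ s := by
      rw [hφ'pos _ hiK, elt_ordOf, Equiv.apply_symm_apply]
    have h3 : cc ≤ (φ' (ordOf (eqvι.symm s))).card := by
      rw [h2]
      calc cc = cc.ord.card := (Cardinal.card_ord cc).symm
        _ ≤ (fφ s).card := Ordinal.card_le_card hs
    exact lt_of_le_of_lt h3 (hΛφ _ hiK)
  -- ultrafilters
  have hUex : ∀ i, i < κ.ord → ∃ U : Ultrafilter (Λ i).out,
      (∀ x : (Λ i).out, ({x}ᶜ : Set (Λ i).out) ∈ U) ∧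
      ∀ S : Set (Set (Λ i).out), #S < Λ i → (∀ s ∈ S, s ∈ U) → ⋂₀ S ∈ U :=
    fun i hi => (hΛmeas i hi).2
  set U : ∀ i, i < κ.ord → Ultrafilter (Λ i).out := fun i hi => (hUex i hi).choose with hUdef
  have hUnp : ∀ i (hi : i < κ.ord), ∀ x : (Λ i).out, ({x}ᶜ : Set (Λ i).out) ∈ U i hi :=
    fun i hi => (hUex i hi).choose_spec.1
  have hUcompl : ∀ i (hi : i < κ.ord), ∀ S : Set (Set (Λ i).out),
      Cardinal.mk S < Λ i → (∀ s ∈ S, s ∈ U i hi) → ⋂₀ S ∈ U i hi :=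
    fun i hi => (hUex i hi).choose_spec.2
  -- enumerations of the measurables' underlying sets
  have heqvE : ∀ i : Ordinal, Nonempty ((Λ i).out ≃ ((Λ i).ord).ToType) := by
    intro i
    rw [← Cardinal.eq, Cardinal.mk_out, Cardinal.mk_toType, Cardinal.card_ord]
  set eqvE : ∀ i : Ordinal, (Λ i).out ≃ ((Λ i).ord).ToType := fun i => (heqvE i).some
    with heqvEdef
  set E : ∀ i : Ordinal, (Λ i).out → Ordinal := fun i t => ordOf (eqvE i t) with hEdef
  have hE_lt : ∀ i t, E i t < (Λ i).ord := fun i t => ordOf_lt _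
  have hE_inj : ∀ i, Function.Injective (E i) := by
    intro i x y h
    exact (eqvE i).injective (ordOf_injective h)
  have hE_surj : ∀ i β, β < (Λ i).ord → ∃ t, E i t = β := by
    intro i β hβ
    refine ⟨(eqvE i).symm (elt β hβ), ?_⟩
    show ordOf (eqvE i ((eqvE i).symm (elt β hβ))) = β
    rw [Equiv.apply_symm_apply, ordOf_elt]
  have hE_ltM : ∀ i, i < κ.ord → ∀ t, E i t < μ.ord := fun i hi t =>
    lt_trans (hE_lt i t) (Cardinal.ord_lt_ord.2 (hΛμ i hi))
  -- the majority color functions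
  have hcex : ∀ i (hi : i < κ.ord) (α : Ordinal), α < (Order.succ μ).ord →
      ∃ γ, γ < θ.ord ∧ {t : (Λ i).out | d α (E i t) = γ} ∈ U i hi := by
    intro i hi α hα
    by_contra hno
    push_neg at hno
    have hPU : ∀ s : (θ.ord).ToType,
        ({t : (Λ i).out | d α (E i t) = ordOf s}ᶜ : Set (Λ i).out) ∈ U i hi := fun s =>
      (Ultrafilter.compl_mem_iff_notMem).2 (hno (ordOf s) (ordOf_lt s))
    have hS : #(Set.range fun s : (θ.ord).ToType =>
        ({t : (Λ i).out | d α (E i t) = ordOf s}ᶜ : Set (Λ i).out)) < Λ i := by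
      refine lt_of_le_of_lt Cardinal.mk_range_le ?_
      rw [Cardinal.mk_toType, Cardinal.card_ord]
      exact hΛθ i hi
    have hmem := hUcompl i hi _ hS (by rintro s ⟨ξ, rfl⟩; exact hPU ξ)
    have hempty : ⋂₀ (Set.range fun s : (θ.ord).ToType =>
        ({t : (Λ i).out | d α (E i t) = ordOf s}ᶜ : Set (Λ i).out)) = ∅ := by
      ext t
      simp only [Set.mem_sInter, Set.mem_range, forall_exists_index, Set.mem_empty_iff_false,
        iff_false, not_forall]
      refine ⟨_, elt (d α (E i t)) (hd α hα _ (hE_ltM i hi t)), rfl, ?_⟩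
      simp only [Set.mem_compl_iff, Set.mem_setOf_eq, not_not, ordOf_elt]
    rw [hempty] at hmem
    exact Ultrafilter.empty_notMem hmem
  set c : Ordinal → Ordinal → Ordinal := fun i α =>
    if h : i < κ.ord ∧ α < (Order.succ μ).ord then (hcex i h.1 α h.2).choose else 0 with hcdef
  have hcspec : ∀ i (hi : i < κ.ord) (α : Ordinal) (hα : α < (Order.succ μ).ord),
      c i α < θ.ord ∧ {t : (Λ i).out | d α (E i t) = c i α} ∈ U i hi := by
    intro i hi α hα
    show ((if h : i < κ.ord ∧ α < (Order.succ μ).ord then (hcex i h.1 α h.2).choose else 0) < θ.ord)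
      ∧ {t : (Λ i).out | d α (E i t) =
        (if h : i < κ.ord ∧ α < (Order.succ μ).ord then (hcex i h.1 α h.2).choose else 0)} ∈ U i hi
    rw [dif_pos ⟨hi, hα⟩]
    exact (hcex i hi α hα).choose_spec
  -- pigeonhole: stabilize the color functions on a set of size μ⁺
  have hmkX : #((Order.succ μ).ord.ToType) = Order.succ μ := by
    rw [Cardinal.mk_toType, Cardinal.card_ord]
  set G : (Order.succ μ).ord.ToType → (κ.ord.ToType → (θ.ord).ToType) := fun x s =>
    elt (c (ordOf s) (ordOf x)) (hcspec _ (ordOf_lt s) _ (ordOf_lt x)).1 with hGdef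
  have htargetG : #(κ.ord.ToType → (θ.ord).ToType) ≤ μ := by
    have h1 : #(κ.ord.ToType → (θ.ord).ToType) = θ ^ κ := by
      rw [← Cardinal.power_def, Cardinal.mk_toType, Cardinal.mk_toType,
        Cardinal.card_ord, Cardinal.card_ord]
    rw [h1]
    have h2 : θ ^ κ ≤ (2 ^ κ) ^ κ :=
      Cardinal.power_le_power_right (le_trans hθκ.le (Cardinal.cantor κ).le)
    have h3 : ((2 : Cardinal) ^ κ) ^ κ = 2 ^ κ := by
      rw [← Cardinal.power_mul, Cardinal.mul_eq_self hκℵ]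
    exact le_trans h2 (by rw [h3]; exact (hpow κ hκμ).le)
  obtain ⟨vG, hvG⟩ := pigeon hℵ G (le_of_eq hmkX.symm) htargetG
  set W : Set ((Order.succ μ).ord.ToType) := {x | G x = vG} with hWdef
  have hWmk : Order.succ μ ≤ #W := hvG
  set cstar : Ordinal → Ordinal := fun i =>
    if hi : i < κ.ord then ordOf (vG (elt i hi)) else 0 with hcstardef
  have hcstarθ : ∀ i (hi : i < κ.ord), cstar i < θ.ord := by
    intro i hi
    show (if hi : i < κ.ord then ordOf (vG (elt i hi)) else 0) < θ.ord
    rw [dif_pos hi]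
    exact ordOf_lt _
  have hWc : ∀ x ∈ W, ∀ i (hi : i < κ.ord), c i (ordOf x) = cstar i := by
    intro x hx i hi
    have h1 : G x (elt i hi) = vG (elt i hi) := by rw [hx]
    have h2 := congrArg ordOf h1
    rw [hGdef] at h2
    simp only [ordOf_elt] at h2
    rw [h2]
    show _ = (if hi : i < κ.ord then ordOf (vG (elt i hi)) else 0)
    rw [dif_pos hi]
  -- the stable color γstar, attained cofinally often
  have hγex : ∃ γ, γ < θ.ord ∧ ∀ bb, bb < κ.ord → ∃ j, bb < j ∧ j < κ.ord ∧ cstar j = γ := by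
    by_contra hno
    push_neg at hno
    have hθord0 : (0 : Ordinal) < θ.ord := by
      rw [Cardinal.lt_ord]
      simp only [Ordinal.card_zero]
      exact zero_lt_iff.2 hθ0
    have hbbex : ∀ s : (θ.ord).ToType, ∃ bb, bb < κ.ord ∧
        ∀ j, bb < j → j < κ.ord → cstar j ≠ ordOf s := fun s => hno (ordOf s) (ordOf_lt s)
    have hsup : (⨆ s : (θ.ord).ToType, (hbbex s).choose) < κ.ord := by
      refine Ordinal.iSup_lt_ord ?_ fun s => (hbbex s).choose_spec.1
      rw [Cardinal.mk_toType, Cardinal.card_ord]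
      have : κ.ord.cof = κ := by rw [hκdef]; exact Ordinal.cof_cof μ.ord
      rw [this]
      exact hθκ
    have hjK : (⨆ s : (θ.ord).ToType, (hbbex s).choose) + 1 < κ.ord := by
      rw [Ordinal.add_one_eq_succ]
      exact (Cardinal.isSuccLimit_ord hκℵ).succ_lt hsup
    set j := (⨆ s : (θ.ord).ToType, (hbbex s).choose) + 1 with hjdef
    have hcj := hcstarθ j hjK
    refine (hbbex (elt (cstar j) hcj)).choose_spec.2 j ?_ hjK ?_
    · refine lt_of_le_of_lt (le_ciSup (f := fun s : (θ.ord).ToType => (hbbex s).choose)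
        (Ordinal.bddAbove_range _) (elt (cstar j) hcj)) ?_
      rw [hjdef, Ordinal.add_one_eq_succ]
      exact Order.lt_succ _
    · rw [ordOf_elt]
  obtain ⟨γstar, hγθ, hγunb⟩ := hγex
  -- coherence classes
  have hCex : ∀ i, i < κ.ord → ∃ C : Set ((Order.succ μ).ord.ToType), C ⊆ W ∧
      Order.succ μ ≤ #C ∧
      ∀ x ∈ C, ∀ y ∈ C, ∀ β, β < (Λ i).ord → d (ordOf x) β = d (ordOf y) β := by
    intro i hi
    set Hf : (Order.succ μ).ord.ToType → ((Λ i).out → (θ.ord).ToType) := fun x t =>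
      elt (d (ordOf x) (E i t)) (hd _ (ordOf_lt x) _ (hE_ltM i hi t)) with hHfdef
    have htarget : #((Λ i).out → (θ.ord).ToType) ≤ μ := by
      have h1 : #((Λ i).out → (θ.ord).ToType) = θ ^ Λ i := by
        rw [← Cardinal.power_def, Cardinal.mk_toType, Cardinal.card_ord, Cardinal.mk_out]
      rw [h1]
      have h2 : θ ^ Λ i ≤ (2 ^ Λ i) ^ Λ i :=
        Cardinal.power_le_power_right
          (le_trans (hΛθ i hi).le (Cardinal.cantor (Λ i)).le)
      have h3 : ((2 : Cardinal) ^ Λ i) ^ Λ i = 2 ^ Λ i := by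
        rw [← Cardinal.power_mul, Cardinal.mul_eq_self (hℵΛ i hi).le]
      exact le_trans h2 (by rw [h3]; exact (hpow (Λ i) (hΛμ i hi)).le)
    obtain ⟨v, hv⟩ := pigeon hℵ (fun x : W => Hf x.1) hWmk htarget
    have hvmk : Order.succ μ ≤ #{x : (Order.succ μ).ord.ToType | x ∈ W ∧ Hf x = v} := by
      refine le_trans hv (le_of_eq (Cardinal.mk_congr ?_))
      exact Equiv.subtypeSubtypeEquivSubtypeInter (· ∈ W) (fun x => Hf x = v)
    refine ⟨{x | x ∈ W ∧ Hf x = v}, fun x hx => hx.1, hvmk, ?_⟩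
    intro x hx y hy β hβ
    obtain ⟨t, rfl⟩ := hE_surj i β hβ
    have h1 : Hf x t = Hf y t := by rw [hx.2, hy.2]
    have h2 := congrArg ordOf h1
    rw [hHfdef] at h2
    simpa only [ordOf_elt] using h2
  set C : Ordinal → Set ((Order.succ μ).ord.ToType) := fun i =>
    if hi : i < κ.ord then (hCex i hi).choose else ∅ with hCdef
  have hCeq : ∀ i (hi : i < κ.ord), C i = (hCex i hi).choose := by
    intro i hi
    show (if hi : i < κ.ord then (hCex i hi).choose else ∅) = _
    rw [dif_pos hi]
  have hCW : ∀ i (hi : i < κ.ord), C i ⊆ W := by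
    intro i hi; rw [hCeq i hi]; exact (hCex i hi).choose_spec.1
  have hCmk : ∀ i (hi : i < κ.ord), Order.succ μ ≤ #(C i) := by
    intro i hi; rw [hCeq i hi]; exact (hCex i hi).choose_spec.2.1
  have hCcoh : ∀ i (hi : i < κ.ord), ∀ x ∈ C i, ∀ y ∈ C i, ∀ β, β < (Λ i).ord →
      d (ordOf x) β = d (ordOf y) β := by
    intro i hi; rw [hCeq i hi]; exact (hCex i hi).choose_spec.2.2
  have hCunb : ∀ i (hi : i < κ.ord) (bb : Ordinal), bb < (Order.succ μ).ord →
      ∃ x, x ∈ C i ∧ bb < ordOf x := by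
    intro i hi bb hbb
    by_contra hcon
    push_neg at hcon
    have hbb1 : bb + 1 < (Order.succ μ).ord := by
      rw [Ordinal.add_one_eq_succ]
      exact (Cardinal.isSuccLimit_ord (hℵ.trans (Order.le_succ μ))).succ_lt hbb
    have hinj : Function.Injective (fun x : C i =>
        elt (ordOf x.1) (lt_of_le_of_lt (hcon x.1 x.2) (by
          rw [Ordinal.add_one_eq_succ]; exact Order.lt_succ bb)) : C i → (bb + 1).ToType) := by
      intro x y h
      have := congrArg ordOf h
      simp only [ordOf_elt] at this
      exact Subtype.ext (ordOf_injective this)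
    have hle : #(C i) ≤ (bb + 1).card := by
      have := Cardinal.mk_le_of_injective hinj
      rwa [Cardinal.mk_toType] at this
    have : Order.succ μ ≤ (bb + 1).card := le_trans (hCmk i hi) hle
    exact absurd (Cardinal.lt_ord.1 hbb1) (not_lt.2 this)
  -- an injection of Iio αstar into Iio μ.ord
  have hαcard : αstar.card ≤ μ := Order.lt_succ_iff.1 (Cardinal.lt_ord.1 hα)
  have heA : Nonempty (αstar.ToType ↪ μ.ord.ToType) := by
    rw [← Cardinal.le_def, Cardinal.mk_toType, Cardinal.mk_toType, Cardinal.card_ord]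
    exact hαcard
  obtain ⟨eA⟩ := heA
  set e : Ordinal → Ordinal := fun ν' =>
    if h : ν' < αstar then ordOf (eA (elt ν' h)) else 0 with hedef
  have hepos : ∀ ν' (h : ν' < αstar), e ν' = ordOf (eA (elt ν' h)) := by
    intro ν' h
    show (if h : ν' < αstar then ordOf (eA (elt ν' h)) else 0) = _
    rw [dif_pos h]
  have he_lt : ∀ ν', ν' < αstar → e ν' < μ.ord := by
    intro ν' h
    rw [hepos ν' h]
    exact ordOf_lt _
  have he_inj : ∀ ν₁, ν₁ < αstar → ∀ ν₂, ν₂ < αstar → e ν₁ = e ν₂ → ν₁ = ν₂ := by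
    intro ν₁ h₁ ν₂ h₂ h
    rw [hepos ν₁ h₁, hepos ν₂ h₂] at h
    have h3 := eA.injective (ordOf_injective h)
    have h4 := congrArg ordOf h3
    simpa only [ordOf_elt] using h4
  -- block index
  have hidxne : ∀ ν', ν' < αstar → {i | i < κ.ord ∧ e ν' < (Λ i).ord}.Nonempty := by
    intro ν' hν
    obtain ⟨i, hiK, hi⟩ := hreach (e ν').card (Cardinal.lt_ord.1 (he_lt ν' hν))
    exact ⟨i, hiK, Cardinal.lt_ord.2 hi⟩
  set idx : Ordinal → Ordinal := fun ν' => sInf {i | i < κ.ord ∧ e ν' < (Λ i).ord} with hidxdef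
  have hidx : ∀ ν', ν' < αstar → idx ν' < κ.ord ∧ e ν' < (Λ (idx ν')).ord :=
    fun ν' hν => csInf_mem (hidxne ν' hν)
  -- the set A, built by recursion
  haveI hXne : Nonempty ((Order.succ μ).ord.ToType) := by
    rw [Ordinal.toType_nonempty_iff_ne_zero]
    exact hM10.ne'
  have hsupltM1 : ∀ (ν' : Ordinal), ν' < αstar →
      ∀ F : ν'.ToType → (Order.succ μ).ord.ToType,
      (⨆ t : ν'.ToType, (ordOf (F t) + 1)) < (Order.succ μ).ord := by
    intro ν' hν F
    refine Ordinal.iSup_lt_ord ?_ ?_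
    · rw [Cardinal.mk_toType, hregsucc]
      exact Cardinal.lt_ord.1 (hν.trans hα)
    · intro t
      rw [Ordinal.add_one_eq_succ]
      exact (Cardinal.isSuccLimit_ord (hℵ.trans (Order.le_succ μ))).succ_lt (ordOf_lt _)
  set gF : ∀ ν' : Ordinal, (∀ ν'', ν'' < ν' → (Order.succ μ).ord.ToType) →
      (Order.succ μ).ord.ToType := fun ν' IH =>
    if hν : ν' < αstar then
      (hCunb (idx ν') (hidx ν' hν).1
        (⨆ t : ν'.ToType, (ordOf (IH (ordOf t) (ordOf_lt t)) + 1))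
        (hsupltM1 ν' hν _)).choose
    else Classical.arbitrary _ with hgFdef
  set g : Ordinal → (Order.succ μ).ord.ToType := fun ν' => Ordinal.lt_wf.fix gF ν' with hgdef
  have hgeq : ∀ ν', g ν' = gF ν' (fun j _ => g j) := fun ν' => WellFounded.fix_eq _ _ _
  have hgspec : ∀ ν' (hν : ν' < αstar), g ν' ∈ C (idx ν') ∧
      (⨆ t : ν'.ToType, (ordOf (g (ordOf t)) + 1)) < ordOf (g ν') := by
    intro ν' hν
    have h1 := hgeq ν'
    rw [hgFdef] at h1
    simp only [dif_pos hν] at h1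
    rw [h1]
    exact (hCunb (idx ν') (hidx ν' hν).1
      (⨆ t : ν'.ToType, (ordOf (g (ordOf t)) + 1)) (hsupltM1 ν' hν _)).choose_spec
  have hgmono : ∀ ν₁ ν₂, ν₁ < ν₂ → ν₂ < αstar → ordOf (g ν₁) < ordOf (g ν₂) := by
    intro ν₁ ν₂ h12 hν₂
    refine lt_of_lt_of_le ?_ (le_of_lt (hgspec ν₂ hν₂).2)
    have h1 : ordOf (g ν₁) + 1 ≤ ⨆ t : ν₂.ToType, (ordOf (g (ordOf t)) + 1) := by
      have := le_ciSup (f := fun t : ν₂.ToType => (ordOf (g (ordOf t)) + 1))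
        (Ordinal.bddAbove_range _) (elt ν₁ h12)
      simpa only [ordOf_elt] using this
    refine lt_of_lt_of_le ?_ h1
    rw [Ordinal.add_one_eq_succ]
    exact Order.lt_succ _
  set Afun : (Set.Iio αstar) → Ordinal := fun v => ordOf (g v.1) with hAfundef
  have hAsm : StrictMono Afun := by
    intro v w h
    exact hgmono v.1 w.1 h w.2
  have hA_order : HasOrderType (Set.range Afun) αstar := ⟨StrictMono.orderIso Afun hAsm⟩
  have hA_sub : Set.range Afun ⊆ Set.Iio (Order.succ μ).ord := by
    rintro _ ⟨v, rfl⟩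
    exact ordOf_lt _
  -- the homogeneous large sets on each block
  set Yset : ∀ j : Ordinal, Set ((Λ j).out) := fun j =>
    {t | ∀ ν', ν' < αstar → d (ordOf (g ν')) (E j t) = γstar} with hYdef
  have hYU : ∀ j (hj : j < κ.ord), cstar j = γstar → Yset j ∈ U j hj := by
    intro j hj hcj
    set Xs : Ordinal → Set ((Λ j).out) := fun ν' =>
      {t | d (ordOf (g ν')) (E j t) = γstar} with hXsdef
    have hXsU : ∀ ν', ν' < αstar → Xs ν' ∈ U j hj := by
      intro ν' hν
      have h1 : c j (ordOf (g ν')) = γstar :=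
        (hWc _ (hCW _ (hidx ν' hν).1 (hgspec ν' hν).1) j hj).trans hcj
      have h2 := (hcspec j hj (ordOf (g ν')) (ordOf_lt _)).2
      rw [h1] at h2
      exact h2
    set βb : Ordinal := ⨆ t : j.ToType, (Λ (ordOf t)).ord with hβbdef
    set F : (βb.ToType ⊕ κ.ord.ToType) → Set ((Λ j).out) := fun z =>
      match z with
      | Sum.inl t => if h : ∃ ν', ν' < αstar ∧ idx ν' < j ∧ e ν' = ordOf t
          then Xs h.choose else ∅
      | Sum.inr t => if h : ∃ ν', ν' < αstar ∧ ¬ idx ν' < j ∧ idx ν' = ordOf t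
          then Xs h.choose else ∅
      with hFdef
    have hcover : ∀ ν', ν' < αstar → ∃ z, F z = Xs ν' := by
      intro ν' hν
      by_cases hlt : idx ν' < j
      · have heβ : e ν' < βb := by
          refine lt_of_lt_of_le (hidx ν' hν).2 ?_
          have := le_ciSup (f := fun t : j.ToType => (Λ (ordOf t)).ord)
            (Ordinal.bddAbove_range _) (elt (idx ν') hlt)
          rwa [ordOf_elt] at this
        refine ⟨Sum.inl (elt (e ν') heβ), ?_⟩
        have hex : ∃ ν₂, ν₂ < αstar ∧ idx ν₂ < j ∧ e ν₂ = ordOf (elt (e ν') heβ) := by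
          rw [ordOf_elt]
          exact ⟨ν', hν, hlt, rfl⟩
        show (if h : ∃ ν₂, ν₂ < αstar ∧ idx ν₂ < j ∧ e ν₂ = ordOf (elt (e ν') heβ)
          then Xs h.choose else ∅) = Xs ν'
        rw [dif_pos hex]
        obtain ⟨h1, h2, h3⟩ := hex.choose_spec
        have h3' : e hex.choose = e ν' := h3.trans (ordOf_elt _ _)
        exact congrArg Xs (he_inj _ h1 _ hν h3')
      · refine ⟨Sum.inr (elt (idx ν') (hidx ν' hν).1), ?_⟩
        have hex : ∃ ν₂, ν₂ < αstar ∧ ¬ idx ν₂ < j ∧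
            idx ν₂ = ordOf (elt (idx ν') (hidx ν' hν).1) := by
          rw [ordOf_elt]
          exact ⟨ν', hν, hlt, rfl⟩
        show (if h : ∃ ν₂, ν₂ < αstar ∧ ¬ idx ν₂ < j ∧
            idx ν₂ = ordOf (elt (idx ν') (hidx ν' hν).1) then Xs h.choose else ∅) = Xs ν'
        rw [dif_pos hex]
        obtain ⟨h1, h2, h3⟩ := hex.choose_spec
        have h3' : idx hex.choose = idx ν' := h3.trans (ordOf_elt _ _)
        -- both g of the chosen ν₂ and g ν' lie in the same coherence class
        have hg2 : g hex.choose ∈ C (idx ν') := by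
          have := (hgspec hex.choose h1).1
          rwa [h3'] at this
        have hg1 : g ν' ∈ C (idx ν') := (hgspec ν' hν).1
        have hΛj : (Λ j).ord ≤ (Λ (idx ν')).ord := by
          refine Cardinal.ord_le_ord.2 (hΛle j (idx ν') ?_ (hidx ν' hν).1)
          rw [← h3']
          exact not_lt.1 h2
        ext t'
        show d (ordOf (g hex.choose)) (E j t') = γstar ↔ d (ordOf (g ν')) (E j t') = γstar
        rw [hCcoh (idx ν') (hidx ν' hν).1 (g hex.choose) hg2 (g ν') hg1 (E j t')
          (lt_of_lt_of_le (hE_lt j t') hΛj)]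
    have hSS : (Xs '' (Set.Iio αstar)) ⊆ Set.range F := by
      rintro _ ⟨ν', hν, rfl⟩
      obtain ⟨z, hz⟩ := hcover ν' hν
      exact ⟨z, hz⟩
    have hSScard : #(Xs '' (Set.Iio αstar)) < Λ j := by
      refine lt_of_le_of_lt (le_trans (Cardinal.mk_le_mk_of_subset hSS) Cardinal.mk_range_le) ?_
      have h1 : #(βb.ToType ⊕ κ.ord.ToType) = βb.card + κ := by
        simp [Cardinal.mk_sum, Cardinal.mk_toType, Cardinal.card_ord]
      rw [h1]
      have h2 : βb.card ≤ Order.succ (⨆ t : j.ToType, Λ (ordOf t)) := by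
        have h3 : βb ≤ (Order.succ (⨆ t : j.ToType, Λ (ordOf t))).ord := by
          refine ciSup_le' ?_
          intro t
          refine Cardinal.ord_le_ord.2 ?_
          exact le_trans (le_ciSup (Cardinal.bddAbove_range _) t) (Order.le_succ _)
        have := Ordinal.card_le_card h3
        rwa [Cardinal.card_ord] at this
      refine lt_of_le_of_lt ?_ (hΛν j hj)
      refine le_trans (add_le_add h2 (hbκ j)) ?_
      refine add_le_add ?_ le_rfl
      calc Order.succ (⨆ t : j.ToType, Λ (ordOf t))
          = Order.succ (⨆ t : j.ToType, Λ (ordOf t)) * 1 := (mul_one _).symm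
        _ ≤ _ := mul_le_mul_right (hb1 j) _
    have hallU : ∀ s ∈ Xs '' (Set.Iio αstar), s ∈ U j hj := by
      rintro _ ⟨ν', hν, rfl⟩
      exact hXsU ν' hν
    have hmem := hUcompl j hj _ hSScard hallU
    have hYeq : Yset j = ⋂₀ (Xs '' (Set.Iio αstar)) := by
      ext t
      simp only [hYdef, Set.mem_setOf_eq, Set.mem_sInter, Set.mem_image, Set.mem_Iio]
      constructor
      · rintro h _ ⟨ν', hν, rfl⟩
        exact h ν' hν
      · intro h ν' hν
        exact h _ ⟨ν', hν, rfl⟩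
    rw [hYeq]
    exact hmem
  have hYcard : ∀ j (hj : j < κ.ord), cstar j = γstar → #(Yset j) = Λ j := by
    intro j hj hcj
    refine le_antisymm (le_trans (Cardinal.mk_set_le _) (le_of_eq (Cardinal.mk_out _))) ?_
    by_contra hcon
    push_neg at hcon
    exact small_not_mem (U j hj) (hUnp j hj) (hUcompl j hj) hcon (hYU j hj hcj)
  -- the set B inside μ
  haveI hZne : Nonempty (μ.ord.ToType) := by
    rw [Ordinal.toType_nonempty_iff_ne_zero]
    exact hM0.ne'
  set embZ : ∀ j : Ordinal, j < κ.ord → ((Λ j).out → μ.ord.ToType) := fun j hj y =>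
    elt (E j y) (hE_ltM j hj y) with hembZdef
  have hembZ_inj : ∀ j (hj : j < κ.ord), Function.Injective (embZ j hj) := by
    intro j hj x y h
    have := congrArg ordOf h
    rw [hembZdef] at this
    simp only [ordOf_elt] at this
    exact hE_inj j this
  set XBp : κ.ord.ToType → Set (μ.ord.ToType) := fun t =>
    if cstar (ordOf t) = γstar then (embZ (ordOf t) (ordOf_lt t)) '' Yset (ordOf t) else ∅
    with hXBpdef
  set XB : Set (μ.ord.ToType) := ⋃ t : κ.ord.ToType, XBp t with hXBdef
  have hXBmem : ∀ z ∈ XB, ∀ ν', ν' < αstar → d (ordOf (g ν')) (ordOf z) = γstar := by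
    intro z hz ν' hν
    rw [hXBdef] at hz
    obtain ⟨t, ht⟩ := Set.mem_iUnion.1 hz
    simp only [hXBpdef] at ht
    by_cases hcs : cstar (ordOf t) = γstar
    · rw [if_pos hcs] at ht
      obtain ⟨y, hy, rfl⟩ := ht
      rw [hembZdef]
      rw [ordOf_elt]
      exact hy ν' hν
    · rw [if_neg hcs] at ht
      exact absurd ht (Set.notMem_empty _)
  have hXBcard : μ ≤ #XB := by
    by_contra hcon
    push_neg at hcon
    obtain ⟨i0, hi0K, hi0⟩ := hreach (#XB) hcon
    obtain ⟨j, hi0j, hjK, hcj⟩ := hγunb i0 hi0K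
    have h1 : #XB < Λ j := lt_trans hi0 (hΛmono i0 j hi0j hjK)
    have h2 : XBp (elt j hjK) ⊆ XB := Set.subset_iUnion XBp (elt j hjK)
    have h3 : #(XBp (elt j hjK)) = Λ j := by
      simp only [hXBpdef]
      have h5 : ordOf (elt j hjK) = j := ordOf_elt _ _
      have hcs : cstar (ordOf (elt j hjK)) = γstar := by rw [h5]; exact hcj
      rw [if_pos hcs]
      refine Eq.trans (Cardinal.mk_image_eq (hembZ_inj (ordOf (elt j hjK)) (ordOf_lt (elt j hjK)))) ?_
      rw [h5]
      exact hYcard j hjK hcj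
    have := Cardinal.mk_le_mk_of_subset h2
    rw [h3] at this
    exact absurd (lt_of_le_of_lt this h1) (lt_irrefl _)
  -- build an increasing enumeration of a subset of XB by recursion
  have wfZ : WellFounded ((· < ·) : μ.ord.ToType → μ.ord.ToType → Prop) := IsWellFounded.wf
  have hdiffne : ∀ (z : μ.ord.ToType) (F : {w : μ.ord.ToType // w < z} → μ.ord.ToType),
      (XB \ Set.range F).Nonempty := by
    intro z F
    rw [Set.diff_nonempty]
    intro hsub
    have h1 : #{w : μ.ord.ToType // w < z} ≤ (ordOf z).card := by
      have hinj : Function.Injective (fun w : {w : μ.ord.ToType // w < z} =>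
          elt (ordOf w.1) (ordOf_lt_ordOf.2 w.2) : _ → (ordOf z).ToType) := by
        intro x y h
        have := congrArg ordOf h
        simp only [ordOf_elt] at this
        exact Subtype.ext (ordOf_injective this)
      have := Cardinal.mk_le_of_injective hinj
      rwa [Cardinal.mk_toType] at this
    have h2 : μ ≤ (ordOf z).card :=
      le_trans hXBcard (le_trans (Cardinal.mk_le_mk_of_subset hsub)
        (le_trans Cardinal.mk_range_le h1))
    exact absurd (Cardinal.lt_ord.1 (ordOf_lt z)) (not_lt.2 h2)
  set fF : ∀ z : μ.ord.ToType, (∀ w, w < z → μ.ord.ToType) → μ.ord.ToType := fun z IH =>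
    wfZ.min (XB \ Set.range (fun p : {w : μ.ord.ToType // w < z} => IH p.1 p.2))
      (hdiffne z _) with hfFdef
  set f : μ.ord.ToType → μ.ord.ToType := fun z => wfZ.fix fF z with hfdef
  have hfeq : ∀ z, f z = fF z (fun w _ => f w) := fun z => WellFounded.fix_eq _ _ _
  have hfspec : ∀ z, f z ∈ XB \ Set.range (fun p : {w : μ.ord.ToType // w < z} => f p.1) ∧
      ∀ y ∈ XB \ Set.range (fun p : {w : μ.ord.ToType // w < z} => f p.1), ¬ y < f z := by
    intro z
    have h1 := hfeq z
    rw [hfFdef] at h1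
    rw [h1]
    exact ⟨WellFounded.min_mem _ _ _, fun y hy => WellFounded.not_lt_min _ _ hy⟩
  have hfXB : ∀ z, f z ∈ XB := fun z => (hfspec z).1.1
  have hfmono : ∀ z' z : μ.ord.ToType, z' < z → f z' < f z := by
    intro z' z h
    have h1 : f z ∉ Set.range (fun p : {w : μ.ord.ToType // w < z} => f p.1) := (hfspec z).1.2
    have hne : f z ≠ f z' := fun he => h1 ⟨⟨z', h⟩, he.symm⟩
    rcases lt_trichotomy (f z') (f z) with hlt | heq | hgt
    · exact hlt
    · exact absurd heq hne.symm
    · exfalso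
      have h2 : f z ∈ XB \ Set.range (fun p : {w : μ.ord.ToType // w < z'} => f p.1) := by
        refine ⟨hfXB z, ?_⟩
        rintro ⟨p, hp⟩
        exact h1 ⟨⟨p.1, p.2.trans h⟩, hp⟩
      exact (hfspec z').2 _ h2 hgt
  set Bfun : (Set.Iio μ.ord) → Ordinal := fun v => ordOf (f (elt v.1 v.2)) with hBfundef
  have hBsm : StrictMono Bfun := by
    intro v w h
    refine ordOf_lt_ordOf.2 (hfmono _ _ ?_)
    refine ordOf_lt_ordOf.1 ?_
    rw [ordOf_elt v.1 v.2, ordOf_elt w.1 w.2]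
    exact h
  refine ⟨Set.range Afun, Set.range Bfun, hA_sub, ?_, hA_order,
    ⟨StrictMono.orderIso Bfun hBsm⟩, γstar, ?_⟩
  · rintro _ ⟨v, rfl⟩
    exact ordOf_lt _
  · rintro _ ⟨v, rfl⟩ _ ⟨w, rfl⟩
    exact hXBmem _ (hfXB _) v.1 v.2
end

section
/- Let μ be a singular cardinal which is a limit of measurable cardinals (i.e., the set of measurable cardinals below μ is unbounded in μ), let θ be a cardinal with θ < μ, let α* be an ordinal with α* < μ⁺, and let d : μ⁺ × μ → θ be any function. Then there exist a set A ⊆ μ⁺ of order type α* and sets B_i ⊆ μ for i < cf(μ) such that the union B = ⋃_{i < cf(μ)} B_i has cardinality μ and, for each i < cf(μ), the restriction of d to A × B_i is constant. -/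
open Cardinal Set Ordinal

namespace PolAux

variable {X : Type} {l : Cardinal.{0}}

lemma iInter_mem (U : Ultrafilter X)
    (hcomp : ∀ S : Set (Set X), #S < l → (∀ s ∈ S, s ∈ U) → ⋂₀ S ∈ U)
    {ι : Type} (f : ι → Set X) (hι : #ι < l) (hf : ∀ i, f i ∈ U) :
    (⋂ i, f i) ∈ U := by
  have h := hcomp (Set.range f) (lt_of_le_of_lt Cardinal.mk_range_le hι)
    (by rintro s ⟨i, rfl⟩; exact hf i)
  rwa [Set.sInter_range] at h

lemma not_mem_of_small (U : Ultrafilter X)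
    (hnp : ∀ x : X, ({x}ᶜ : Set X) ∈ U)
    (hcomp : ∀ S : Set (Set X), #S < l → (∀ s ∈ S, s ∈ U) → ⋂₀ S ∈ U)
    {u : Set X} (hu : #u < l) : u ∉ U := by
  intro hmem
  have h : (⋂ x : u, ({(x : X)}ᶜ : Set X)) ∈ U :=
    iInter_mem U hcomp _ hu (fun i => hnp i)
  have he : (⋂ x : u, ({(x : X)}ᶜ : Set X)) = uᶜ := by
    ext y
    simp only [Set.mem_iInter, Set.mem_compl_iff, Set.mem_singleton_iff, Set.mem_compl_iff]
    constructor
    · intro hy hyu; exact hy ⟨y, hyu⟩ rfl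
    · rintro hy x rfl; exact hy x.2
  rw [he] at h
  have := Ultrafilter.nonempty_of_mem (Filter.inter_mem hmem h)
  simp at this

lemma mk_of_mem (U : Ultrafilter X)
    (hnp : ∀ x : X, ({x}ᶜ : Set X) ∈ U)
    (hcomp : ∀ S : Set (Set X), #S < l → (∀ s ∈ S, s ∈ U) → ⋂₀ S ∈ U)
    (hX : #X = l) {u : Set X} (hu : u ∈ U) : #u = l :=
  le_antisymm (hX ▸ mk_set_le u)
    (not_lt.1 fun h => not_mem_of_small U hnp hcomp h hu)

lemma two_power_lt {ν : Cardinal.{0}} (hm : IsMeasurableCardinal l) (hν : ν < l) :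
    (2 : Cardinal) ^ ν < l := by
  obtain ⟨hℵ, U, hnp, hcomp⟩ := hm
  by_contra hle
  push_neg at hle
  have h1 : #l.out ≤ #(Set ν.out) := by
    rw [mk_out, mk_set, mk_out]; exact hle
  obtain ⟨J⟩ := Cardinal.le_def _ _ |>.mp h1
  classical
  set B : ν.out → Set l.out := fun ζ =>
    if {x | ζ ∈ J x} ∈ U then {x | ζ ∈ J x} else {x | ζ ∈ J x}ᶜ with hB
  have hBU : ∀ ζ, B ζ ∈ U := by
    intro ζ
    rw [hB]; dsimp only
    split_ifs with h
    · exact h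
    · exact (Ultrafilter.compl_mem_iff_notMem).2 h
  have hY : (⋂ ζ, B ζ) ∈ U :=
    iInter_mem U hcomp B (by rw [mk_out]; exact hν) hBU
  obtain ⟨x, hx⟩ := Ultrafilter.nonempty_of_mem hY
  obtain ⟨y, hy, hyx⟩ := Ultrafilter.nonempty_of_mem (Filter.inter_mem hY (hnp x))
  apply hyx
  have hJ : J y = J x := by
    ext ζ
    have hxζ : x ∈ B ζ := Set.mem_iInter.1 hx ζ
    have hyζ : y ∈ B ζ := Set.mem_iInter.1 hy ζ
    rw [hB] at hxζ hyζ; dsimp only at hxζ hyζ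
    split_ifs at hxζ hyζ with h
    · exact iff_of_true hyζ hxζ
    · exact iff_of_false hyζ hxζ
  rw [J.injective hJ]
  rfl

lemma exists_color (U : Ultrafilter X)
    (hcomp : ∀ S : Set (Set X), #S < l → (∀ s ∈ S, s ∈ U) → ⋂₀ S ∈ U)
    {τ : Ordinal.{0}} (hτ : τ.card < l)
    (f : X → Ordinal) (hf : ∀ x, f x < τ) :
    ∃ γ, γ < τ ∧ {x | f x = γ} ∈ U := by
  by_contra h
  push_neg at h
  have hB : ∀ ζ : τ.ToType, {x | f x ≠ ((((Ordinal.ToType.mk (o := τ))).symm ζ : Set.Iio τ) : Ordinal)} ∈ U := by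
    intro ζ
    have h2 := h _ (Set.mem_Iio.1 (((Ordinal.ToType.mk (o := τ))).symm ζ).2)
    have : {x | f x ≠ ((((Ordinal.ToType.mk (o := τ))).symm ζ : Set.Iio τ) : Ordinal)} =
        {x | f x = ((((Ordinal.ToType.mk (o := τ))).symm ζ : Set.Iio τ) : Ordinal)}ᶜ := by
      ext x; simp
    rw [this]
    exact (Ultrafilter.compl_mem_iff_notMem).2 h2
  have hY := iInter_mem U hcomp _ (by rw [Cardinal.mk_toType]; exact hτ) hB
  obtain ⟨x, hx⟩ := Ultrafilter.nonempty_of_mem hY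
  have hone := Set.mem_iInter.1 hx ((Ordinal.ToType.mk (o := τ)) ⟨f x, hf x⟩)
  simp at hone

lemma exists_big_fiber {α C : Type} {c : Cardinal.{0}} (hreg : c.IsRegular)
    (f : α → C) (hα : c ≤ #α) (hC : #C < c) : ∃ y : C, c ≤ #{x : α // f x = y} := by
  by_contra h
  push_neg at h
  have h1 : #α = Cardinal.sum fun y : C => #{x : α // f x = y} := by
    rw [← Cardinal.mk_sigma]
    exact Cardinal.mk_congr (Equiv.sigmaFiberEquiv f).symm
  have h2 := Cardinal.sum_lt_of_isRegular hreg hC (fun y => h y)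
  rw [← h1] at h2
  exact absurd hα h2.not_ge

lemma isRegular_of_measurable (hm : IsMeasurableCardinal l) : l.IsRegular := by
  obtain ⟨hℵ, U, hnp, hcomp⟩ := hm
  refine ⟨hℵ.le, ?_⟩
  by_contra hcof
  push_neg at hcof
  obtain ⟨ι, f, hlsub, hι⟩ := Ordinal.exists_lsub_cof l.ord
  -- value map from l.out to Iio l.ord
  have hmk : #(ULift.{1,0} l.out) = #(Set.Iio l.ord) := by
    rw [mk_uLift, mk_out, Ordinal.mk_Iio_ordinal, Cardinal.card_ord]
  obtain ⟨E⟩ := Cardinal.eq.mp hmk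
  set w : l.out → Ordinal := fun x => ((E ⟨x⟩ : Set.Iio l.ord) : Ordinal) with hw
  have hwlt : ∀ x, w x < l.ord := fun x => (E ⟨x⟩).2
  have hsmall : ∀ i : ι, #{x : l.out | w x ≤ f i} < l := by
    intro i
    have hfi : f i < l.ord := hlsub ▸ Ordinal.lt_lsub f i
    have hinj : Function.Injective
        (fun t : {x : l.out | w x ≤ f i} =>
          (Ordinal.ToType.mk (o := (f i + 1))) ⟨w t.1, lt_of_le_of_lt t.2 (Order.lt_succ _ |>.trans_eq (Ordinal.add_one_eq_succ _).symm)⟩) := by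
      intro a b hab
      have h2 := ((Ordinal.ToType.mk (o := (f i + 1)))).injective hab
      have hval : w a.1 = w b.1 := Subtype.mk_eq_mk.1 h2
      have h3 : E ⟨a.1⟩ = E ⟨b.1⟩ := Subtype.ext hval
      have h4 := E.injective h3
      exact Subtype.ext (congrArg ULift.down h4)
    calc #{x : l.out | w x ≤ f i} ≤ #((f i + 1).ToType) := Cardinal.mk_le_of_injective hinj
      _ = (f i + 1).card := Cardinal.mk_toType _
      _ < l := by
          rw [Ordinal.add_one_eq_succ, Ordinal.card_succ]
          exact Cardinal.add_lt_of_lt hℵ.le ((Cardinal.lt_ord).1 hfi) (lt_trans one_lt_aleph0 hℵ)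
  have hcover : ∀ x : l.out, ∃ i, w x ≤ f i := by
    intro x
    have : w x < Ordinal.lsub f := hlsub.symm ▸ hwlt x
    exact (Ordinal.lt_lsub_iff).1 this
  have hcompl : ∀ i : ι, {x : l.out | w x ≤ f i}ᶜ ∈ U := fun i =>
    (Ultrafilter.compl_mem_iff_notMem).2 (not_mem_of_small U hnp hcomp (hsmall i))
  have hY : (⋂ i, {x : l.out | w x ≤ f i}ᶜ) ∈ U :=
    iInter_mem U hcomp _ (by rw [hι]; exact hcof) hcompl
  obtain ⟨x, hx⟩ := Ultrafilter.nonempty_of_mem hY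
  obtain ⟨i, hi⟩ := hcover x
  exact (Set.mem_iInter.1 hx i) hi

lemma mk_lt_toType {o : Ordinal.{0}} (q : o.ToType) :
    #{p : o.ToType // p < q} ≤ (((Ordinal.ToType.mk (o := o)).symm q : Set.Iio o) : Ordinal).card := by
  have hinj : Function.Injective (fun p : {p : o.ToType // p < q} =>
      (Ordinal.ToType.mk (o := (((Ordinal.ToType.mk (o := o)).symm q : Set.Iio o) : Ordinal)))
        ⟨(((Ordinal.ToType.mk (o := o)).symm p.1 : Set.Iio o) : Ordinal), by
          have h1 : (Ordinal.ToType.mk (o := o)).symm p.1 < (Ordinal.ToType.mk (o := o)).symm q :=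
            (Ordinal.ToType.mk (o := o)).symm.lt_iff_lt.2 p.2
          exact Subtype.coe_lt_coe.2 h1⟩) := by
    intro a b hab
    have h1 := (Ordinal.ToType.mk (o := ((((Ordinal.ToType.mk (o := o)).symm q : Set.Iio o) : Ordinal)))).injective hab
    have h2 := Subtype.mk_eq_mk.1 h1
    have h3 := (Ordinal.ToType.mk (o := o)).symm.injective (Subtype.ext h2)
    exact Subtype.ext h3
  calc #{p : o.ToType // p < q} ≤ #((((Ordinal.ToType.mk (o := o)).symm q : Set.Iio o) : Ordinal).ToType) :=
      Cardinal.mk_le_of_injective hinj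
    _ = _ := Cardinal.mk_toType _

end PolAux

set_option maxHeartbeats 1000000 in
/-- For `μ` a singular limit of measurable cardinals, `θ < μ`, `α* < μ⁺` and
`d : μ⁺ × μ → θ`, there are `A ⊆ μ⁺` of order type `α*` and sets `B i ⊆ μ`
for `i < cf(μ)` whose union has cardinality `μ`, such that `d` is constant on
`A × B i` for each `i < cf(μ)`. -/
theorem polarized_partition_limit_of_measurables_piecewise
    (μ θ : Cardinal.{0}) (αstar : Ordinal.{0}) (hsing : μ.ord.cof < μ)
    (hlim : ∀ ν < μ, ∃ l, ν < l ∧ l < μ ∧ IsMeasurableCardinal l)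
    (hθ : θ < μ) (hα : αstar < (Order.succ μ).ord)
    (d : Ordinal → Ordinal → Ordinal)
    (hd : ∀ α < (Order.succ μ).ord, ∀ β < μ.ord, d α β < θ.ord) :
    ∃ (A : Set Ordinal) (B : Ordinal → Set Ordinal),
      A ⊆ Set.Iio (Order.succ μ).ord ∧ HasOrderType A αstar ∧
      (∀ i < μ.ord.cof.ord, B i ⊆ Set.Iio μ.ord) ∧
      Cardinal.mk (⋃ i ∈ Set.Iio μ.ord.cof.ord, B i) = Cardinal.lift.{1,0} μ ∧
      ∀ i < μ.ord.cof.ord, ∃ γ : Ordinal, ∀ α ∈ A, ∀ β ∈ B i, d α β = γ := by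
  classical
  -- ## Basic consequences
  obtain ⟨l₀, hθl₀, hl₀μ, hml₀⟩ := hlim θ hθ
  have hμℵ : ℵ₀ < μ := hml₀.1.trans hl₀μ
  have hμℵle : ℵ₀ ≤ μ := hμℵ.le
  have hreg : (Order.succ μ).IsRegular := Cardinal.isRegular_succ hμℵle
  have hSL : ∀ ν, ν < μ → (2 : Cardinal) ^ ν < μ := by
    intro ν hν
    obtain ⟨l, h1, h2, hm⟩ := hlim ν hν
    exact (PolAux.two_power_lt hm h1).trans h2
  have hPOW : ∀ a b : Cardinal, a < μ → b < μ → a ^ b < μ := by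
    intro a b ha hb
    calc a ^ b ≤ (2 ^ a) ^ b := Cardinal.power_le_power_right (Cardinal.cantor a).le
      _ = 2 ^ (a * b) := by rw [← Cardinal.power_mul]
      _ ≤ 2 ^ (max (a * b) ℵ₀) := Cardinal.power_le_power_left two_ne_zero (le_max_left _ _)
      _ < μ := hSL _ (max_lt (Cardinal.mul_lt_of_lt hμℵle ha hb) hμℵ)
  have hκℵ : ℵ₀ ≤ μ.ord.cof := by
    rw [Ordinal.aleph0_le_cof]
    exact Cardinal.isSuccLimit_ord hμℵle
  -- ## A cofinal family in `μ.ord` indexed by `K := μ.ord.cof.ord.ToType`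
  obtain ⟨ι, fℓ, hlsub, hι⟩ := Ordinal.exists_lsub_cof μ.ord
  have hKcard : #(μ.ord.cof.ord.ToType) = μ.ord.cof := by
    rw [Cardinal.mk_toType, Cardinal.card_ord]
  obtain ⟨eK⟩ := Cardinal.eq.mp (hι.trans hKcard.symm)
  set g : μ.ord.cof.ord.ToType → Ordinal := fun k => fℓ (eK.symm k) with hgdef
  have hgM : ∀ k, g k < μ.ord := fun k => hlsub ▸ Ordinal.lt_lsub fℓ _
  have hgub : ∀ x, x < μ.ord → ∃ k, x ≤ g k := by
    intro x hx
    obtain ⟨i, hi⟩ := (Ordinal.lt_lsub_iff).1 (hlsub.symm ▸ hx)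
    exact ⟨eK i, by rw [hgdef]; simpa using hi⟩
  -- ## The measurable cardinals `lam k`
  have hbig : ∀ k, max (max θ μ.ord.cof) (g k).card < μ := fun k =>
    max_lt (max_lt hθ hsing) ((Cardinal.lt_ord).1 (hgM k))
  set lam : μ.ord.cof.ord.ToType → Cardinal := fun k => (hlim _ (hbig k)).choose with hlamdef
  have hlamspec : ∀ k, max (max θ μ.ord.cof) (g k).card < lam k ∧ lam k < μ ∧
      IsMeasurableCardinal (lam k) := fun k => (hlim _ (hbig k)).choose_spec
  have hθlam : ∀ k, θ < lam k := fun k =>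
    lt_of_le_of_lt (le_max_left _ _ |>.trans (le_max_left _ _)) (hlamspec k).1
  have hκlam : ∀ k, μ.ord.cof < lam k := fun k =>
    lt_of_le_of_lt (le_max_right _ _ |>.trans (le_max_left _ _)) (hlamspec k).1
  have hglam : ∀ k, (g k).card < lam k := fun k =>
    lt_of_le_of_lt (le_max_right _ _) (hlamspec k).1
  have hlamμ : ∀ k, lam k < μ := fun k => (hlamspec k).2.1
  have hmeas : ∀ k, IsMeasurableCardinal (lam k) := fun k => (hlamspec k).2.2
  have hlamℵ : ∀ k, ℵ₀ < lam k := fun k => (hmeas k).1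
  set U : ∀ k, Ultrafilter (lam k).out := fun k => ((hmeas k).2).choose with hUdef
  have hU : ∀ k, (∀ x : (lam k).out, ({x}ᶜ : Set (lam k).out) ∈ U k) ∧
      ∀ S : Set (Set (lam k).out), #S < lam k → (∀ s ∈ S, s ∈ U k) → ⋂₀ S ∈ U k :=
    fun k => ((hmeas k).2).choose_spec
  have hlamub : ∀ ν, ν < μ → ∃ k, ν < lam k := by
    intro ν hν
    obtain ⟨k, hk⟩ := hgub ν.ord ((Cardinal.ord_lt_ord).2 hν)
    refine ⟨k, ?_⟩
    have h3 : ν = ν.ord.card := (Cardinal.card_ord ν).symm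
    rw [h3]
    exact lt_of_le_of_lt (Ordinal.card_le_card hk) (hglam k)
  -- ## Enumerations of the underlying types by ordinals
  have hmkXk : ∀ k, #(ULift.{1,0} (lam k).out) = #(Set.Iio (lam k).ord) := by
    intro k
    rw [Cardinal.mk_uLift, Cardinal.mk_out, Ordinal.mk_Iio_ordinal, Cardinal.card_ord]
  set EV : ∀ k, ULift.{1,0} (lam k).out ≃ Set.Iio (lam k).ord :=
    fun k => (Cardinal.eq.mp (hmkXk k)).some with hEVdef
  set ev : ∀ k, (lam k).out → Ordinal := fun k x => ((EV k ⟨x⟩ : Set.Iio (lam k).ord) : Ordinal)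
    with hevdef
  have hevlt : ∀ k x, ev k x < (lam k).ord := fun k x => (EV k ⟨x⟩).2
  have hevM : ∀ k x, ev k x < μ.ord :=
    fun k x => (hevlt k x).trans ((Cardinal.ord_lt_ord).2 (hlamμ k))
  have hevinj : ∀ k, Function.Injective (ev k) := by
    intro k x y hxy
    have h1 : EV k ⟨x⟩ = EV k ⟨y⟩ := Subtype.ext hxy
    have h2 := (EV k).injective h1
    exact congrArg ULift.down h2
  have hevsurj : ∀ k (β : Ordinal), β < (lam k).ord → ∃ x, ev k x = β := by
    intro k β hβ
    refine ⟨((EV k).symm ⟨β, hβ⟩).down, ?_⟩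
    simp only [hevdef]
    rw [show (⟨((EV k).symm ⟨β, hβ⟩).down⟩ : ULift.{1,0} (lam k).out) = (EV k).symm ⟨β, hβ⟩ from rfl,
      Equiv.apply_symm_apply]
  -- ## The color codomain `Θ`
  set Θv : θ.ord.ToType → Ordinal := fun t => (((Ordinal.ToType.mk (o := θ.ord)).symm t : Set.Iio θ.ord) : Ordinal)
    with hΘvdef
  set tΘ : ∀ β, β < θ.ord → θ.ord.ToType := fun β h => (Ordinal.ToType.mk (o := θ.ord)) ⟨β, h⟩ with htΘdef
  have hvtΘ : ∀ β h, Θv (tΘ β h) = β := by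
    intro β h
    simp only [hΘvdef, htΘdef, OrderIso.symm_apply_apply]
  -- ## Values of `d` seen from `P := (Order.succ μ).ord.ToType`
  set vP : (Order.succ μ).ord.ToType → Ordinal :=
    fun p => (((Ordinal.ToType.mk (o := (Order.succ μ).ord)).symm p : Set.Iio (Order.succ μ).ord) : Ordinal)
    with hvPdef
  have hvP : ∀ p, vP p < (Order.succ μ).ord := fun p => ((Ordinal.ToType.mk (o := (Order.succ μ).ord)).symm p).2
  have hvPle : ∀ p q, vP p ≤ vP q ↔ p ≤ q := by
    intro p q
    rw [hvPdef]
    constructor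
    · intro h
      have h2 : (Ordinal.ToType.mk (o := (Order.succ μ).ord)).symm p ≤ (Ordinal.ToType.mk (o := (Order.succ μ).ord)).symm q :=
        Subtype.coe_le_coe.1 h
      exact (Ordinal.ToType.mk (o := (Order.succ μ).ord)).symm.le_iff_le.1 h2
    · intro h
      exact Subtype.coe_le_coe.2 ((Ordinal.ToType.mk (o := (Order.succ μ).ord)).symm.le_iff_le.2 h)
  set dv : ∀ (_ : (Order.succ μ).ord.ToType) (k : μ.ord.cof.ord.ToType), (lam k).out → Ordinal :=
    fun p k x => d (vP p) (ev k x) with hdvdef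
  have hdv : ∀ p k x, dv p k x < θ.ord := fun p k x => hd _ (hvP p) _ (hevM k x)
  -- ## the `U k`-majority colors
  have hcolor : ∀ p k, ∃ γ, γ < θ.ord ∧ {x | dv p k x = γ} ∈ U k := fun p k =>
    PolAux.exists_color (U k) (hU k).2 (by rw [Cardinal.card_ord]; exact hθlam k) (dv p k) (hdv p k)
  set cΘ : (Order.succ μ).ord.ToType → ∀ k : μ.ord.cof.ord.ToType, θ.ord.ToType :=
    fun p k => tΘ (hcolor p k).choose (hcolor p k).choose_spec.1 with hcΘdef
  have hcΘ : ∀ p k, {x | dv p k x = Θv (cΘ p k)} ∈ U k := by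
    intro p k
    have h2 := (hcolor p k).choose_spec.2
    simp only [hcΘdef, hvtΘ]
    exact h2
  -- ## The uniformized pool `A'`
  have hPcard : #((Order.succ μ).ord.ToType) = Order.succ μ := by
    rw [Cardinal.mk_toType, Cardinal.card_ord]
  have hCcard : #(∀ _ : μ.ord.cof.ord.ToType, θ.ord.ToType) < Order.succ μ := by
    have h1 : #(∀ _ : μ.ord.cof.ord.ToType, θ.ord.ToType) = (θ ^ μ.ord.cof : Cardinal) := by
      rw [Cardinal.mk_arrow, Cardinal.lift_id, Cardinal.lift_id, Cardinal.mk_toType,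
        Cardinal.mk_toType, Cardinal.card_ord, Cardinal.card_ord]
    rw [h1]
    exact (hPOW θ μ.ord.cof hθ hsing).trans_le (Order.le_succ μ)
  obtain ⟨c₀, hc₀⟩ := PolAux.exists_big_fiber hreg (fun p => cΘ p) hPcard.ge hCcard
  set A' : Set ((Order.succ μ).ord.ToType) := {p | cΘ p = c₀} with hA'def
  have hA'card : Order.succ μ ≤ #A' := hc₀
  -- ## The trace maps and the generic point `α₀`
  set FΘ : ∀ (_ : (Order.succ μ).ord.ToType) (k : μ.ord.cof.ord.ToType), (lam k).out → θ.ord.ToType :=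
    fun p k x => tΘ (dv p k x) (hdv p k x) with hFΘdef
  set cls : ∀ k : μ.ord.cof.ord.ToType, ((lam k).out → θ.ord.ToType) →
      Set ((Order.succ μ).ord.ToType) := fun k c => {p | p ∈ A' ∧ FΘ p k = c} with hclsdef
  set bad : Set ((Order.succ μ).ord.ToType) :=
    ⋃ (k : μ.ord.cof.ord.ToType), ⋃ (c : {c // #(cls k c) ≤ μ}), cls k c.1 with hbaddef
  have hbadle : #bad ≤ μ := by
    have hinner : ∀ k : μ.ord.cof.ord.ToType,
        #(⋃ (c : {c // #(cls k c) ≤ μ}), cls k c.1) ≤ μ := by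
      intro k
      refine (Cardinal.mk_iUnion_le _).trans ?_
      have h1 : #{c : (lam k).out → θ.ord.ToType // #(cls k c) ≤ μ} ≤ μ := by
        refine (Cardinal.mk_subtype_le _).trans ?_
        have h2 : #((lam k).out → θ.ord.ToType) = (θ ^ lam k : Cardinal) := by
          rw [Cardinal.mk_arrow, Cardinal.lift_id, Cardinal.lift_id, Cardinal.mk_out,
            Cardinal.mk_toType, Cardinal.card_ord]
        rw [h2]
        exact (hPOW θ (lam k) hθ (hlamμ k)).le
      have h3 : (⨆ c : {c // #(cls k c) ≤ μ}, #(cls k c.1)) ≤ μ := ciSup_le' fun c => c.2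
      calc #{c : (lam k).out → θ.ord.ToType // #(cls k c) ≤ μ} *
            (⨆ c : {c // #(cls k c) ≤ μ}, #(cls k c.1)) ≤ μ * μ := mul_le_mul' h1 h3
        _ = μ := Cardinal.mul_eq_self hμℵle
    refine (Cardinal.mk_iUnion_le _).trans ?_
    calc #(μ.ord.cof.ord.ToType) * (⨆ k, #(⋃ (c : {c // #(cls k c) ≤ μ}), cls k c.1)) ≤ μ * μ :=
        mul_le_mul' (by rw [hKcard]; exact hsing.le) (ciSup_le' hinner)
      _ = μ := Cardinal.mul_eq_self hμℵle
  have hnotsub : ¬ (A' ⊆ bad) := by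
    intro hsub
    have := (hA'card.trans (Cardinal.mk_le_mk_of_subset hsub)).trans hbadle
    exact absurd this (Order.lt_succ μ).not_ge
  obtain ⟨α₀, hα₀A, hα₀bad⟩ := Set.not_subset.1 hnotsub
  set Cm : μ.ord.cof.ord.ToType → Set ((Order.succ μ).ord.ToType) :=
    fun k => {p | p ∈ A' ∧ FΘ p k = FΘ α₀ k} with hCmdef
  have hCm : ∀ k, μ < #(Cm k) := by
    intro k
    by_contra h
    push_neg at h
    exact hα₀bad (Set.mem_iUnion.2 ⟨k, Set.mem_iUnion.2 ⟨⟨FΘ α₀ k, h⟩, ⟨hα₀A, rfl⟩⟩⟩)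
  -- ## Picking elements above any bound
  have hpick : ∀ (s : Set ((Order.succ μ).ord.ToType)), μ < #s →
      ∀ x, x < (Order.succ μ).ord → ∃ p ∈ s, x < vP p := by
    intro s hs x hx
    by_contra h
    push_neg at h
    set q := (Ordinal.ToType.mk (o := (Order.succ μ).ord)) ⟨x, hx⟩ with hqdef
    have hq : vP q = x := by
      simp only [hvPdef, hqdef, OrderIso.symm_apply_apply]
    have hsub : s ⊆ Set.Iic q := by
      intro p hp
      have h2 : vP p ≤ vP q := by rw [hq]; exact h p hp
      exact (hvPle p q).1 h2
    have hIio : #(Set.Iio q) ≤ μ := by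
      have h0 : #(Set.Iio q) = #{p : (Order.succ μ).ord.ToType // p < q} := rfl
      rw [h0]
      refine (PolAux.mk_lt_toType q).trans ?_
      have hx2 : (((Ordinal.ToType.mk (o := (Order.succ μ).ord)).symm q :
          Set.Iio (Order.succ μ).ord) : Ordinal) < (Order.succ μ).ord :=
        ((Ordinal.ToType.mk (o := (Order.succ μ).ord)).symm q).2
      exact Order.lt_succ_iff.1 ((Cardinal.lt_ord).1 hx2)
    have hle : #s ≤ μ := by
      refine (Cardinal.mk_le_mk_of_subset hsub).trans ?_
      rw [← Set.Iio_insert]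
      refine (Cardinal.mk_insert_le).trans ?_
      calc #(Set.Iio q) + 1 ≤ μ + 1 := by
            exact add_le_add_left hIio 1
        _ = μ := Cardinal.add_one_eq hμℵle
    exact absurd hle hs.not_ge
  -- ## Position bookkeeping: `jval` and `level`
  have hTμ : #(αstar.ToType) ≤ μ := by
    rw [Cardinal.mk_toType]
    exact Order.lt_succ_iff.1 ((Cardinal.lt_ord).1 hα)
  have hMcard : #(μ.ord.ToType) = μ := by rw [Cardinal.mk_toType, Cardinal.card_ord]
  obtain ⟨J⟩ := (Cardinal.le_def _ _).1 (hTμ.trans hMcard.ge)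
  set jval : αstar.ToType → Ordinal :=
    fun t => (((Ordinal.ToType.mk (o := μ.ord)).symm (J t) : Set.Iio μ.ord) : Ordinal) with hjdef
  have hjM : ∀ t, jval t < μ.ord := fun t => ((Ordinal.ToType.mk (o := μ.ord)).symm (J t)).2
  have hlevel : ∀ t, ∃ k, (jval t).card < lam k := fun t =>
    hlamub _ ((Cardinal.lt_ord).1 (hjM t))
  set level : αstar.ToType → μ.ord.cof.ord.ToType := fun t => (hlevel t).choose with hleveldef
  have hlevelspec : ∀ t, jval t < (lam (level t)).ord := fun t =>
    (Cardinal.lt_ord).2 (hlevel t).choose_spec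
  set Con : μ.ord.cof.ord.ToType → Set (αstar.ToType) :=
    fun k => {t | lam (level t) < lam k} with hCondef
  have hCon : ∀ k, #(Con k) < lam k := by
    intro k
    have hregk := PolAux.isRegular_of_measurable (hmeas k)
    have hsub : Con k ⊆ ⋃ (j : {j // lam j < lam k}), {t | level t = j.1} := by
      intro t ht
      exact Set.mem_iUnion.2 ⟨⟨level t, ht⟩, rfl⟩
    refine (Cardinal.mk_le_mk_of_subset hsub).trans_lt ?_
    refine (Cardinal.mk_iUnion_le _).trans_lt ?_
    have hterm : ∀ j : {j // lam j < lam k}, #({t | level t = j.1} : Set (αstar.ToType)) ≤ lam j.1 := by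
      intro j
      have hinj2 : Function.Injective (fun t : ↥({t | level t = j.1} : Set (αstar.ToType)) =>
          (Ordinal.ToType.mk (o := (lam j.1).ord)) ⟨jval t.1, by
            have h5 := hlevelspec t.1
            rw [show level t.1 = j.1 from t.2] at h5
            exact h5⟩) := by
        intro a b hab
        have h2 := (Ordinal.ToType.mk (o := (lam j.1).ord)).injective hab
        have h3 : jval a.1 = jval b.1 := Subtype.mk_eq_mk.1 h2
        have h4 : (Ordinal.ToType.mk (o := μ.ord)).symm (J a.1) = (Ordinal.ToType.mk (o := μ.ord)).symm (J b.1) :=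
          Subtype.ext h3
        exact Subtype.ext (J.injective ((Ordinal.ToType.mk (o := μ.ord)).symm.injective h4))
      calc #({t | level t = j.1} : Set (αstar.ToType)) ≤ #((lam j.1).ord.ToType) :=
          Cardinal.mk_le_of_injective hinj2
        _ = lam j.1 := by rw [Cardinal.mk_toType, Cardinal.card_ord]
    have h1 : #{j // lam j < lam k} < lam k :=
      lt_of_le_of_lt ((Cardinal.mk_subtype_le _).trans_eq hKcard) (hκlam k)
    have h2 : (⨆ j : {j // lam j < lam k}, #({t | level t = j.1} : Set (αstar.ToType))) < lam k :=
      Cardinal.iSup_lt_of_isRegular hregk h1 fun j => (hterm j).trans_lt j.2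
    exact Cardinal.mul_lt_of_lt hregk.1 h1 h2
  -- ## The recursive construction of `ahat`
  have hEx : ∀ (t : αstar.ToType) (ih : ∀ s, s < t → (Order.succ μ).ord.ToType),
      ∃ p, p ∈ Cm (level t) ∧ (⨆ s : {s // s < t}, vP (ih s.1 s.2)) < vP p := by
    intro t ih
    have hsup : (⨆ s : {s // s < t}, vP (ih s.1 s.2)) < (Order.succ μ).ord := by
      apply Ordinal.iSup_lt_ord
      · rw [hreg.cof_eq]
        refine lt_of_le_of_lt ((PolAux.mk_lt_toType t).trans
          (Ordinal.card_le_card (le_of_lt (((Ordinal.ToType.mk (o := αstar)).symm t).2)))) ?_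
        exact (Cardinal.lt_ord).1 hα
      · intro s
        exact hvP _
    obtain ⟨p, hp1, hp2⟩ := hpick (Cm (level t)) (hCm _) _ hsup
    exact ⟨p, hp1, hp2⟩
  set ahat : αstar.ToType → (Order.succ μ).ord.ToType :=
    WellFoundedLT.fix (fun t ih => (hEx t ih).choose) with hahatdef
  have hahat : ∀ t, ahat t ∈ Cm (level t) ∧
      (⨆ s : {s // s < t}, vP (ahat s.1)) < vP (ahat t) := by
    intro t
    have h1 : ahat t = (hEx t (fun s _ => ahat s)).choose := by
      rw [hahatdef]
      exact WellFoundedLT.fix_eq _ t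
    rw [h1]
    exact (hEx t (fun s _ => ahat s)).choose_spec
  have hmono : StrictMono (fun t => vP (ahat t)) := by
    intro s t hst
    have h1 : vP (ahat s) ≤ ⨆ s' : {s' // s' < t}, vP (ahat s'.1) :=
      le_ciSup (Ordinal.bddAbove_range _) (⟨s, hst⟩ : {s' // s' < t})
    exact h1.trans_lt (hahat t).2
  -- ## The `B`-side sets
  set bset : ∀ k : μ.ord.cof.ord.ToType, Set ((lam k).out) := fun k =>
    {x | dv α₀ k x = Θv (c₀ k)} ∩ ⋂ (t : ↥(Con k)), {x | dv (ahat t.1) k x = Θv (c₀ k)}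
    with hbsetdef
  have hcolA' : ∀ p, p ∈ A' → ∀ k, {x | dv p k x = Θv (c₀ k)} ∈ U k := by
    intro p hp k
    have h1 := hcΘ p k
    have h2 : cΘ p = c₀ := hp
    rwa [h2] at h1
  have hbsetU : ∀ k, bset k ∈ U k := by
    intro k
    refine Filter.inter_mem (hcolA' α₀ hα₀A k) ?_
    exact PolAux.iInter_mem (U k) (hU k).2 _ (hCon k)
      (fun t => hcolA' (ahat t.1) (hahat t.1).1.1 k)
  have hbsetcard : ∀ k, #(bset k) = lam k := fun k =>
    PolAux.mk_of_mem (U k) (hU k).1 (hU k).2 (Cardinal.mk_out _) (hbsetU k)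
  -- ## Definition of `A` and `B`
  set A : Set Ordinal := Set.range (fun t => vP (ahat t)) with hAdef
  set B : Ordinal → Set Ordinal := fun i =>
    if h : i < μ.ord.cof.ord then
      (ev ((Ordinal.ToType.mk (o := μ.ord.cof.ord)) ⟨i, h⟩)) '' (bset ((Ordinal.ToType.mk (o := μ.ord.cof.ord)) ⟨i, h⟩))
    else ∅ with hBdef
  have hAsub : A ⊆ Set.Iio (Order.succ μ).ord := by
    rintro x ⟨t, rfl⟩
    exact hvP _
  have hAiso : HasOrderType A αstar := by
    have hfmono : StrictMono (fun t : αstar.ToType => (⟨vP (ahat t), Set.mem_range_self t⟩ : ↥A)) :=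
      fun s t h => Subtype.mk_lt_mk.2 (hmono h)
    have hfsurj : Function.Surjective
        (fun t : αstar.ToType => (⟨vP (ahat t), Set.mem_range_self t⟩ : ↥A)) := by
      rintro ⟨x, t, rfl⟩
      exact ⟨t, rfl⟩
    exact ⟨((Ordinal.ToType.mk (o := αstar))).trans
      (StrictMono.orderIsoOfSurjective _ hfmono hfsurj)⟩
  have hBsub : ∀ i, i < μ.ord.cof.ord → B i ⊆ Set.Iio μ.ord := by
    intro i hi x hx
    rw [hBdef] at hx
    dsimp only at hx
    rw [dif_pos hi] at hx
    obtain ⟨x', _, rfl⟩ := hx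
    exact hevM _ _
  -- ## Cardinality of the union
  have hUnle : #(⋃ i ∈ Set.Iio μ.ord.cof.ord, B i) ≤ Cardinal.lift.{1,0} μ := by
    have hsub : (⋃ i ∈ Set.Iio μ.ord.cof.ord, B i) ⊆ Set.Iio μ.ord := by
      intro x hx
      simp only [Set.mem_iUnion] at hx
      obtain ⟨i, hi, hx⟩ := hx
      exact hBsub i hi hx
    refine (Cardinal.mk_le_mk_of_subset hsub).trans_eq ?_
    rw [Ordinal.mk_Iio_ordinal, Cardinal.card_ord]
  have hUnge : Cardinal.lift.{1,0} μ ≤ #(⋃ i ∈ Set.Iio μ.ord.cof.ord, B i) := by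
    have hkle : ∀ k, Cardinal.lift.{1,0} (lam k) ≤ #(⋃ i ∈ Set.Iio μ.ord.cof.ord, B i) := by
      intro k
      have hi₀ : (((Ordinal.ToType.mk (o := μ.ord.cof.ord)).symm k : Set.Iio μ.ord.cof.ord) : Ordinal) <
          μ.ord.cof.ord := ((Ordinal.ToType.mk (o := μ.ord.cof.ord)).symm k).2
      have hBk : B (((Ordinal.ToType.mk (o := μ.ord.cof.ord)).symm k : Set.Iio μ.ord.cof.ord) : Ordinal) =
          (ev k) '' (bset k) := by
        rw [hBdef]
        dsimp only
        rw [dif_pos hi₀]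
        have hkk : (Ordinal.ToType.mk (o := μ.ord.cof.ord))
            ⟨(((Ordinal.ToType.mk (o := μ.ord.cof.ord)).symm k : Set.Iio μ.ord.cof.ord) : Ordinal), hi₀⟩ = k := by
          rw [show (⟨(((Ordinal.ToType.mk (o := μ.ord.cof.ord)).symm k : Set.Iio μ.ord.cof.ord) : Ordinal), hi₀⟩ :
              Set.Iio μ.ord.cof.ord) = (Ordinal.ToType.mk (o := μ.ord.cof.ord)).symm k from Subtype.ext rfl]
          exact OrderIso.apply_symm_apply _ _
        rw [hkk]
      have hmkB : #(B (((Ordinal.ToType.mk (o := μ.ord.cof.ord)).symm k : Set.Iio μ.ord.cof.ord) : Ordinal)) =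
          Cardinal.lift.{1,0} (lam k) := by
        rw [hBk]
        have h1 := Cardinal.mk_image_eq_lift (ev k) (bset k) (hevinj k)
        rw [Cardinal.lift_id'] at h1
        rw [h1, hbsetcard]
      rw [← hmkB]
      exact Cardinal.mk_le_mk_of_subset (Set.subset_biUnion_of_mem hi₀)
    have hbdd : BddAbove (Set.range lam) := ⟨μ, by rintro _ ⟨k, rfl⟩; exact (hlamμ k).le⟩
    have hμsup : μ ≤ ⨆ k, lam k := by
      refine le_of_forall_lt ?_
      intro c hc
      obtain ⟨k, hk⟩ := hlamub c hc
      exact hk.trans_le (le_ciSup hbdd k)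
    calc Cardinal.lift.{1,0} μ ≤ Cardinal.lift.{1,0} (⨆ k, lam k) := Cardinal.lift_le.2 hμsup
      _ = ⨆ k, Cardinal.lift.{1,0} (lam k) := Cardinal.lift_iSup hbdd
      _ ≤ #(⋃ i ∈ Set.Iio μ.ord.cof.ord, B i) := ciSup_le' hkle
  -- ## Constancy
  have key : ∀ k : μ.ord.cof.ord.ToType, ∀ α ∈ A, ∀ β ∈ (ev k) '' (bset k),
      d α β = Θv (c₀ k) := by
    intro k α hαm β hβ
    obtain ⟨t, rfl⟩ := hαm
    obtain ⟨x, hx, rfl⟩ := hβ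
    have hx0 : dv α₀ k x = Θv (c₀ k) := hx.1
    rcases lt_or_ge (lam (level t)) (lam k) with hcase | hcase
    · exact Set.mem_iInter.1 hx.2 ⟨t, hcase⟩
    · have hord : (lam k).ord ≤ (lam (level t)).ord := Cardinal.ord_le_ord.2 hcase
      obtain ⟨y, hy⟩ := hevsurj (level t) (ev k x) ((hevlt k x).trans_le hord)
      have hC := (hahat t).1
      have hF := congrFun hC.2 y
      have hdveq : dv (ahat t) (level t) y = dv α₀ (level t) y := by
        have h2 := congrArg Θv hF
        simp only [hFΘdef, hvtΘ] at h2
        exact h2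
      have h1 : d (vP (ahat t)) (ev k x) = d (vP α₀) (ev k x) := by
        rw [← hy]
        exact hdveq
      rw [h1]
      exact hx0
  have hconst : ∀ i, i < μ.ord.cof.ord → ∃ γ : Ordinal, ∀ α ∈ A, ∀ β ∈ B i, d α β = γ := by
    intro i hi
    refine ⟨Θv (c₀ ((Ordinal.ToType.mk (o := μ.ord.cof.ord)) ⟨i, hi⟩)), ?_⟩
    intro α hαm β hβ
    rw [hBdef] at hβ
    dsimp only at hβ
    rw [dif_pos hi] at hβ
    exact key _ α hαm β hβ
  exact ⟨A, B, hAsub, hAiso, hBsub, le_antisymm hUnle hUnge, hconst⟩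
end
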